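/- For every connected graph Γ, there exists at most one strong congruence π of Γ such that χ(Γ/π) = 1. -/

import Mathlib

/-!
Write `Θ = Γ/(π ⊓ ρ)` and `Δ = Γ/π`. The incidence graph of an admissible graph joins every
vertex to its `r`-component, for each color `r`. Every `r`-component is a loop or has exactly one
vertex without an outgoing `r`-edge, and counting with this shows that the incidence graph has
Euler characteristic `χ`; so the incidence graph of `Δ` is a tree, while that of `Θ` is connected.

The projection `Θ → Δ` is injective on each `r`-component. Indeed, a directed `r`-chain of `Θ`
whose image closes up in `Δ` winds around a loop of `Δ`, which has `d r` vertices; its image in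
`Γ/ρ` also returns to its start after `d r` steps, since loops of `Γ/ρ` have `d r` vertices and
strings of `Γ/ρ` are too short to carry such a chain. As a vertex of `Θ` is determined by its
images in `Γ/π` and `Γ/ρ`, the chain itself returns after `d r` steps.

Hence the projection induces a locally injective map from a connected graph to a tree, which is
injective. So `π ≤ ρ` on the vertices of `Γ`, and `ρ ≤ π` by symmetry.
-/

noncomputable section

open Filter Topology

/-- A finite, directed, edge-colored graph with colors in `Fin s`,
with vertices living in an ambient type `V`. -/
structure CGraph (V : Type) (s : ℕ) where
  verts : Set V
  finite : verts.Finite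
  nonem : verts.Nonempty
  E : Fin s → V → V → Prop
  memL : ∀ r a b, E r a b → a ∈ verts
  memR : ∀ r a b, E r a b → b ∈ verts

namespace CGraph

variable {V W : Type} {s : ℕ}

/-- A graph is trivial iff it has no edges (of any color). -/
def Trivial (Γ : CGraph V s) : Prop := ∀ r a b, ¬ Γ.E r a b

/-- Two vertices are adjacent iff there is an edge (of any color, either direction)
between them. -/
def Adj (Γ : CGraph V s) (a b : V) : Prop := ∃ r, Γ.E r a b ∨ Γ.E r b a

/-- A graph is connected iff any two of its vertices are joined by a finite chain of
edges (of any colors and either direction). -/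
def Connected (Γ : CGraph V s) : Prop :=
  ∀ a ∈ Γ.verts, ∀ b ∈ Γ.verts, Relation.ReflTransGen Γ.Adj a b

/-- `Γ'` is a subgraph of `Γ`. -/
def Subgraph (Γ' Γ : CGraph V s) : Prop :=
  Γ'.verts ⊆ Γ.verts ∧ ∀ r a b, Γ'.E r a b → Γ.E r a b

/-- `C` is a connected component of `Γ`: a maximal connected subgraph. -/
def IsComponent (C Γ : CGraph V s) : Prop :=
  C.Subgraph Γ ∧ C.Connected ∧
    ∀ C' : CGraph V s, C'.Subgraph Γ → C'.Connected → C.Subgraph C' → C'.Subgraph C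

/-- A graph is admissible iff no two distinct edges of the same color begin at the
same vertex or end at the same vertex. -/
def Admissible (Γ : CGraph V s) : Prop :=
  (∀ r a b b', Γ.E r a b → Γ.E r a b' → b = b') ∧
    (∀ r a a' b, Γ.E r a b → Γ.E r a' b → a = a')

/-- `Γ.mono r` is `Γ` with all edges not of color `r` removed. -/
def mono (Γ : CGraph V s) (r : Fin s) : CGraph V s where
  verts := Γ.verts
  finite := Γ.finite
  nonem := Γ.nonem
  E := fun r' a b => r' = r ∧ Γ.E r' a b
  memL := fun r' a b h => Γ.memL r' a b h.2
  memR := fun r' a b h => Γ.memR r' a b h.2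

/-- An `r`-path of `Γ` is a non-trivial connected component of `Γ.mono r`. -/
def IsRPath (P Γ : CGraph V s) (r : Fin s) : Prop :=
  P.IsComponent (Γ.mono r) ∧ ¬ P.Trivial

/-- A path of `Γ` is an `r`-path for some color `r`. -/
def IsPathOf (P Γ : CGraph V s) : Prop := ∃ r, P.IsRPath Γ r

/-- A path is closed (a closed circuit) iff every one of its vertices has an
outgoing edge. -/
def Closed (P : CGraph V s) : Prop := ∀ a ∈ P.verts, ∃ r b, P.E r a b

/-- A loop of `Γ` is a path of `Γ` which is a closed circuit. -/
def IsLoopOf (P Γ : CGraph V s) : Prop := P.IsPathOf Γ ∧ P.Closed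

/-- A string of `Γ` is a path of `Γ` which is not a loop. -/
def IsStringOf (P Γ : CGraph V s) : Prop := P.IsPathOf Γ ∧ ¬ P.Closed

/-- The number of edges of `Γ` (counting colors). -/
def edgeCount (Γ : CGraph V s) : ℕ :=
  Nat.card {p : Fin s × V × V // Γ.E p.1 p.2.1 p.2.2}

/-- The number of loops (of any color) of `Γ`. -/
def loopCount (Γ : CGraph V s) : ℕ :=
  Nat.card {P : CGraph V s // P.IsLoopOf Γ}

/-- The number of vertices of `Γ`. -/
def vertCount (Γ : CGraph V s) : ℕ := Nat.card Γ.verts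

/-- The loop-characteristic `χ(Γ) = V(Γ) - E(Γ) + L(Γ)`. -/
def chi (Γ : CGraph V s) : ℤ :=
  (Γ.vertCount : ℤ) - (Γ.edgeCount : ℤ) + (Γ.loopCount : ℤ)

/-- `Γ.erase P` is the graph obtained from `Γ` by removing all edges of `P`. -/
def erase (Γ P : CGraph V s) : CGraph V s where
  verts := Γ.verts
  finite := Γ.finite
  nonem := Γ.nonem
  E := fun r a b => Γ.E r a b ∧ ¬ P.E r a b
  memL := fun r a b h => Γ.memL r a b h.1
  memR := fun r a b h => Γ.memR r a b h.1

/-- A graph is strongly admissible (w.r.t. `d : Fin s → ℕ∞`) iff it is admissible,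
every `r`-loop has length `d r`, and every `r`-string has length `< d r`. -/
def StronglyAdmissible (d : Fin s → ℕ∞) (Γ : CGraph V s) : Prop :=
  Γ.Admissible ∧ ∀ r P, IsRPath P Γ r →
    (P.Closed → (P.edgeCount : ℕ∞) = d r) ∧ (¬ P.Closed → (P.edgeCount : ℕ∞) < d r)

/-- The quotient of `Γ` by a partition (setoid) `π` of the ambient vertex type. -/
def quot (Γ : CGraph V s) (π : Setoid V) : CGraph (Quotient π) s where
  verts := Quotient.mk π '' Γ.verts
  finite := Γ.finite.image _
  nonem := Γ.nonem.image _
  E := fun r A B => ∃ a b, Γ.E r a b ∧ Quotient.mk π a = A ∧ Quotient.mk π b = B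
  memL := fun r A B h => by
    obtain ⟨a, b, he, ha, hb⟩ := h
    exact ⟨a, Γ.memL r a b he, ha⟩
  memR := fun r A B h => by
    obtain ⟨a, b, he, ha, hb⟩ := h
    exact ⟨b, Γ.memR r a b he, hb⟩

/-- `π` is a congruence of `Γ`: for any two edges of the same color, the source
blocks agree iff the target blocks agree. -/
def IsCongruence (Γ : CGraph V s) (π : Setoid V) : Prop :=
  ∀ r a₁ b₁ a₂ b₂, Γ.E r a₁ b₁ → Γ.E r a₂ b₂ → (π.r a₁ a₂ ↔ π.r b₁ b₂)

/-- `π` is a strong congruence of `Γ`: a congruence whose quotient is strongly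
admissible. -/
def IsStrongCongruence (d : Fin s → ℕ∞) (Γ : CGraph V s) (π : Setoid V) : Prop :=
  Γ.IsCongruence π ∧ (Γ.quot π).StronglyAdmissible d

/-- Isomorphism of edge-colored graphs: a bijection between the vertex sets
preserving the `r`-edges in both directions, for every color `r`. -/
def Iso (Γ₁ : CGraph V s) (Γ₂ : CGraph W s) : Prop :=
  ∃ Φ : V → W, Set.BijOn Φ Γ₁.verts Γ₂.verts ∧
    ∀ r a b, a ∈ Γ₁.verts → b ∈ Γ₁.verts → (Γ₂.E r (Φ a) (Φ b) ↔ Γ₁.E r a b)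

end CGraph

namespace SimpleGraph

variable {α β : Type*} {G : SimpleGraph α} {H : SimpleGraph β}

def Hom.LocallyInjective (f : G →g H) : Prop :=
  ∀ ⦃u v w⦄, G.Adj u w → G.Adj v w → f u = f v → u = v

/-- A locally injective map never backtracks, and a walk without backtracking in a forest is a
path. -/
lemma Hom.LocallyInjective.isPath_map {f : G →g H} (hf : f.LocallyInjective) (hH : H.IsAcyclic)
    {x y : α} {p : G.Walk x y} (hp : p.IsPath) : (p.map f).IsPath := by
  induction p with
  | nil => simp
  | @cons u v w huv q ih =>
    rw [Walk.cons_isPath_iff] at hp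
    refine (Walk.cons_isPath_iff _ _).2 ⟨ih hp.1, fun hmem => ?_⟩
    have hsnd := hH.eq_snd_of_adj_start (ih hp.1) (f.map_adj huv.symm) hmem
    cases q with
    | nil => exact (f.map_adj huv).ne (by simpa using hsnd)
    | cons hvz q' =>
      obtain rfl := hf huv hvz.symm (by simpa using hsnd)
      exact hp.2 (by simp)

lemma Hom.LocallyInjective.injective {f : G →g H} (hf : f.LocallyInjective)
    (hG : G.Preconnected) (hH : H.IsAcyclic) : Function.Injective f := by
  classical
  intro x y hxy
  obtain ⟨w⟩ := hG x y
  have hpath := (Walk.isPath_copy _ rfl hxy.symm).2 (hf.isPath_map hH w.bypass_isPath)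
  apply Walk.eq_of_length_eq_zero (p := w.bypass)
  simpa using Walk.length_eq_zero_iff.2 (Walk.isPath_iff_nil.1 hpath)

end SimpleGraph

namespace CGraph

variable {V : Type} {s : ℕ}

theorem ext {Γ Γ' : CGraph V s} (hv : Γ.verts = Γ'.verts) (hE : Γ.E = Γ'.E) : Γ = Γ' := by
  cases Γ; cases Γ'; simp_all

def ColorAdj (Γ : CGraph V s) (r : Fin s) (a b : V) : Prop := Γ.E r a b ∨ Γ.E r b a

/-- `a` and `b` lie in the same component of `Γ.mono r`, trivial components included. -/
def SameComp (Γ : CGraph V s) (r : Fin s) : V → V → Prop :=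
  Relation.ReflTransGen (Γ.ColorAdj r)

def IsChain (Γ : CGraph V s) (r : Fin s) (c : ℕ → V) (k : ℕ) : Prop :=
  ∀ i < k, Γ.E r (c i) (c (i + 1))

def HasOut (Γ : CGraph V s) (r : Fin s) (a : V) : Prop := ∃ b, Γ.E r a b

/-- The `r`-component of `a` is a loop. -/
def CompClosed (Γ : CGraph V s) (r : Fin s) (a : V) : Prop :=
  ∀ b, Γ.SameComp r a b → Γ.HasOut r b

variable {Γ : CGraph V s} {r : Fin s}

namespace SameComp

lemma refl (a : V) : Γ.SameComp r a a := Relation.ReflTransGen.refl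

lemma of_edge {a b : V} (h : Γ.E r a b) : Γ.SameComp r a b := .single (Or.inl h)

lemma symm {a b : V} (h : Γ.SameComp r a b) : Γ.SameComp r b a :=
  have : Std.Symm (Γ.ColorAdj r) := ⟨fun _ _ h => Or.symm h⟩
  Relation.ReflTransGen.stdSymm.symm _ _ h

lemma trans {a b c : V} (h : Γ.SameComp r a b) (h' : Γ.SameComp r b c) : Γ.SameComp r a c :=
  Relation.ReflTransGen.trans h h'

lemma mem_verts {a b : V} (h : Γ.SameComp r a b) (ha : a ∈ Γ.verts) : b ∈ Γ.verts := by
  induction h with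
  | refl => exact ha
  | tail _ hstep _ => exact hstep.elim (Γ.memR _ _ _) (Γ.memL _ _ _)

end SameComp

lemma finite_sameComp {a : V} (ha : a ∈ Γ.verts) : Finite {x // Γ.SameComp r a x} :=
  (Γ.finite.subset fun _ hx => SameComp.mem_verts hx ha).to_subtype

/-- An `r`-component of an admissible graph is a directed path or cycle. -/
lemma Admissible.reflTransGen_or_of_sameComp (hadm : Γ.Admissible) {a b : V}
    (h : Γ.SameComp r a b) :
    Relation.ReflTransGen (Γ.E r) a b ∨ Relation.ReflTransGen (Γ.E r) b a := by
  induction h with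
  | refl => exact Or.inl .refl
  | @tail b z _ hstep ih =>
    rcases ih with hab | hba <;> rcases hstep with hbz | hzb
    · exact Or.inl (hab.tail hbz)
    · rcases hab.cases_tail with rfl | ⟨b', hab', hb'b⟩
      · exact Or.inr (.single hzb)
      · exact Or.inl (hadm.2 r _ _ _ hzb hb'b ▸ hab')
    · rcases hba.cases_head with rfl | ⟨b', hbb', hb'a⟩
      · exact Or.inl (.single hbz)
      · exact Or.inr (hadm.1 r _ _ _ hbz hbb' ▸ hb'a)
    · exact Or.inr (hba.head hzb)

lemma Admissible.eq_of_sameComp_of_not_hasOut (hadm : Γ.Admissible) {a b : V}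
    (h : Γ.SameComp r a b) (ha : ¬ Γ.HasOut r a) (hb : ¬ Γ.HasOut r b) : a = b := by
  rcases hadm.reflTransGen_or_of_sameComp h with h | h <;>
    rcases h.cases_head with h | ⟨z, hz, _⟩
  · exact h
  · exact absurd ⟨z, hz⟩ ha
  · exact h.symm
  · exact absurd ⟨z, hz⟩ hb

namespace IsChain

variable {c : ℕ → V} {k : ℕ}

lemma mono (hc : Γ.IsChain r c k) {k' : ℕ} (h : k' ≤ k) : Γ.IsChain r c k' :=
  fun i hi => hc i (by omega)

lemma shift (hc : Γ.IsChain r c k) (t : ℕ) : Γ.IsChain r (fun i => c (i + t)) (k - t) :=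
  fun i hi => by simpa [Nat.add_right_comm] using hc (i + t) (by omega)

lemma sameComp (hc : Γ.IsChain r c k) {i : ℕ} (hi : i ≤ k) : Γ.SameComp r (c 0) (c i) := by
  induction i with
  | zero => exact .refl _
  | succ n ih => exact (ih (by omega)).trans (.of_edge (hc n (by omega)))

lemma hasOut (hc : Γ.IsChain r c k) {i : ℕ} (hi : i < k) : Γ.HasOut r (c i) := ⟨_, hc i hi⟩

/-- `r`-edges are injective on targets, so a repetition in a chain propagates backwards. -/
lemma eq_sub_of_eq (hadm : Γ.Admissible) (hc : Γ.IsChain r c k) {i j : ℕ} (hij : i ≤ j)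
    (hj : j ≤ k) (h : c i = c j) : c 0 = c (j - i) := by
  induction i generalizing j with
  | zero => simpa using h
  | succ n ih =>
    have hj' : j - 1 + 1 = j := by omega
    have hprev : c n = c (j - 1) :=
      hadm.2 r _ _ _ (hc n (by omega)) (h ▸ hj' ▸ hc (j - 1) (by omega))
    rw [ih (by omega) (by omega) hprev, show j - 1 - n = j - (n + 1) by omega]

/-- A directed `r`-cycle is a whole `r`-component: admissibility leaves no edge by which to
leave it. -/
lemma exists_eq_of_cycle (hadm : Γ.Admissible) (hc : Γ.IsChain r c k) (hk : 1 ≤ k)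
    (hcy : c k = c 0) {b : V} (hb : Γ.SameComp r (c 0) b) : ∃ i < k, c i = b := by
  have hstep : ∀ i < k, ∀ z, Γ.ColorAdj r (c i) z → ∃ j < k, c j = z := by
    intro i hi z hz
    rcases hz with he | he
    · refine if h : i + 1 < k then ⟨i + 1, h, (hadm.1 r _ _ _ he (hc i hi)).symm⟩ else
        ⟨0, by omega, ?_⟩
      rw [hadm.1 r _ _ _ he (hc i hi), show i + 1 = k by omega, hcy]
    · obtain ⟨j, hj, hji⟩ : ∃ j < k, Γ.E r (c j) (c i) := by
        rcases Nat.eq_zero_or_pos i with rfl | hpos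
        · refine ⟨k - 1, by omega, ?_⟩
          simpa [show k - 1 + 1 = k by omega, hcy] using hc (k - 1) (by omega)
        · refine ⟨i - 1, by omega, ?_⟩
          simpa [show i - 1 + 1 = i by omega] using hc (i - 1) (by omega)
      exact ⟨j, hj, (hadm.2 r _ _ _ he hji).symm⟩
  induction hb with
  | refl => exact ⟨0, by omega, rfl⟩
  | tail _ hadj ih =>
    obtain ⟨i, hi, rfl⟩ := ih
    exact hstep i hi _ hadj

lemma compClosed_of_cycle (hadm : Γ.Admissible) (hc : Γ.IsChain r c k) (hk : 1 ≤ k)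
    (hcy : c k = c 0) : Γ.CompClosed r (c 0) := by
  intro b hb
  obtain ⟨i, hi, rfl⟩ := hc.exists_eq_of_cycle hadm hk hcy hb
  exact hc.hasOut hi

lemma card_le_of_cycle (hadm : Γ.Admissible) (hc : Γ.IsChain r c k) (hk : 1 ≤ k)
    (hcy : c k = c 0) : Nat.card {x // Γ.SameComp r (c 0) x} ≤ k := by
  have hsurj : Function.Surjective
      (fun i : Fin k => (⟨c i, hc.sameComp i.2.le⟩ : {x // Γ.SameComp r (c 0) x})) := by
    rintro ⟨b, hb⟩
    obtain ⟨i, hi, rfl⟩ := hc.exists_eq_of_cycle hadm hk hcy hb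
    exact ⟨⟨i, hi⟩, rfl⟩
  simpa using Nat.card_le_card_of_surjective _ hsurj

/-- By pigeonhole the chain repeats within `n + 1` steps (`n` the size of the component); the
repetition yields a cycle through `c 0`, which is the whole component and so has length `n`. -/
lemma apply_card_eq (hadm : Γ.Admissible) (hc : Γ.IsChain r c k) (h0 : c 0 ∈ Γ.verts)
    (hk : Nat.card {x // Γ.SameComp r (c 0) x} ≤ k) :
    c (Nat.card {x // Γ.SameComp r (c 0) x}) = c 0 := by
  set n := Nat.card {x // Γ.SameComp r (c 0) x}
  have := finite_sameComp (r := r) h0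
  have hnotinj : ¬ Function.Injective
      (fun i : Fin (n + 1) => (⟨c i, hc.sameComp (by omega)⟩ : {x // Γ.SameComp r (c 0) x})) :=
    fun hinj => by simpa [n] using Nat.card_le_card_of_injective _ hinj
  obtain ⟨i, j, hij, hne⟩ : ∃ i j : Fin (n + 1), c i = c j ∧ i ≠ j := by
    simpa [Function.Injective, Fin.ext_iff] using hnotinj
  wlog hlt : i < j generalizing i j
  · exact this j i hij.symm hne.symm (lt_of_le_of_ne (not_lt.1 hlt) hne.symm)
  have hcy : c (j - i) = c 0 := (hc.eq_sub_of_eq hadm hlt.le (by omega) hij).symm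
  have hcard := (hc.mono (k' := j - i) (by omega)).card_le_of_cycle hadm (by omega) hcy
  have hj := j.2
  rwa [show (j : ℕ) - i = n by omega] at hcy

end IsChain

lemma exists_isChain_of_reflTransGen {a b : V} (h : Relation.ReflTransGen (Γ.E r) a b) :
    ∃ c k, Γ.IsChain r c k ∧ c 0 = a ∧ c k = b := by
  induction h with
  | refl => exact ⟨fun _ => a, 0, fun _ h => absurd h (Nat.not_lt_zero _), rfl, rfl⟩
  | @tail b z _ hbz ih =>
    obtain ⟨c, k, hc, h0, hk⟩ := ih
    refine ⟨fun i => if i ≤ k then c i else z, k + 1, fun i hi => ?_, by simpa using h0,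
      by simp⟩
    rcases Nat.lt_or_ge i k with h | h
    · simpa [h.le, Nat.succ_le_of_lt h] using hc i h
    · obtain rfl : i = k := by omega
      simpa [hk] using hbz

def component (Γ : CGraph V s) (r : Fin s) (a : V) (ha : a ∈ Γ.verts) : CGraph V s where
  verts := {x | Γ.SameComp r a x}
  finite := Γ.finite.subset fun _ hx => SameComp.mem_verts hx ha
  nonem := ⟨a, .refl a⟩
  E := fun r' x y => r' = r ∧ Γ.E r x y ∧ Γ.SameComp r a x
  memL := fun _ _ _ h => h.2.2
  memR := fun _ _ _ h => h.2.2.trans (.of_edge h.2.1)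

lemma sameComp_of_subgraph_mono {C : CGraph V s} (hC : C.Subgraph (Γ.mono r)) {u v : V}
    (h : Relation.ReflTransGen C.Adj u v) : Γ.SameComp r u v := by
  induction h with
  | refl => exact .refl _
  | tail _ hstep ih =>
    obtain ⟨r', he | he⟩ := hstep
    · obtain ⟨rfl, he⟩ := hC.2 _ _ _ he
      exact ih.trans (.of_edge he)
    · obtain ⟨rfl, he⟩ := hC.2 _ _ _ he
      exact ih.trans (SameComp.of_edge he).symm

lemma component_connected {a : V} (ha : a ∈ Γ.verts) : (Γ.component r a ha).Connected := by
  have key : ∀ v, Γ.SameComp r a v → Relation.ReflTransGen (Γ.component r a ha).Adj a v := by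
    intro v hv
    induction hv with
    | refl => exact .refl
    | @tail b' b hab' hstep ih =>
      refine ih.tail ?_
      rcases hstep with he | he
      · exact ⟨r, Or.inl ⟨rfl, he, hab'⟩⟩
      · exact ⟨r, Or.inr ⟨rfl, he, hab'.trans (SameComp.of_edge he).symm⟩⟩
  have hsymm : Std.Symm (Γ.component r a ha).Adj := ⟨fun _ _ ⟨r', h⟩ => ⟨r', h.symm⟩⟩
  intro x hx y hy
  exact (Relation.ReflTransGen.stdSymm.symm _ _ (key x hx)).trans (key y hy)

lemma component_subgraph_mono {a : V} (ha : a ∈ Γ.verts) :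
    (Γ.component r a ha).Subgraph (Γ.mono r) :=
  ⟨fun _ hx => SameComp.mem_verts (Γ := Γ) hx ha, by
    rintro _ _ _ ⟨rfl, he, -⟩
    exact ⟨rfl, he⟩⟩

lemma subgraph_component {C : CGraph V s} (hC : C.Subgraph (Γ.mono r)) (hconn : C.Connected)
    {a : V} (haC : a ∈ C.verts) (ha : a ∈ Γ.verts) : C.Subgraph (Γ.component r a ha) := by
  refine ⟨fun z hz => sameComp_of_subgraph_mono hC (hconn a haC z hz), fun r' x y he => ?_⟩
  obtain ⟨rfl, he'⟩ := hC.2 _ _ _ he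
  exact ⟨rfl, he', sameComp_of_subgraph_mono hC (hconn a haC x (C.memL _ _ _ he))⟩

lemma component_isComponent {a : V} (ha : a ∈ Γ.verts) :
    (Γ.component r a ha).IsComponent (Γ.mono r) :=
  ⟨component_subgraph_mono ha, component_connected ha, fun _ hC hconn hsub =>
    subgraph_component hC hconn (hsub.1 (SameComp.refl a)) ha⟩

lemma Subgraph.antisymm {C C' : CGraph V s} (h : C.Subgraph C') (h' : C'.Subgraph C) : C = C' :=
  ext (h.1.antisymm h'.1) (funext₃ fun r' x y => propext ⟨h.2 r' x y, h'.2 r' x y⟩)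

lemma IsComponent.eq_component {P : CGraph V s} (hP : P.IsComponent (Γ.mono r)) {a : V}
    (haP : a ∈ P.verts) (ha : a ∈ Γ.verts) : P = Γ.component r a ha :=
  have hsub := subgraph_component hP.1 hP.2.1 haP ha
  hsub.antisymm (hP.2.2 _ (component_subgraph_mono ha) (component_connected ha) hsub)

lemma component_eq_of_sameComp {a b : V} (ha : a ∈ Γ.verts) (hb : b ∈ Γ.verts)
    (h : Γ.SameComp r a b) : Γ.component r a ha = Γ.component r b hb :=
  (component_isComponent ha).eq_component h hb

lemma component_closed_iff {a : V} (ha : a ∈ Γ.verts) :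
    (Γ.component r a ha).Closed ↔ Γ.CompClosed r a := by
  refine ⟨fun h b hb => ?_, fun h x hx => ?_⟩
  · obtain ⟨_, z, -, hz, -⟩ := h b hb
    exact ⟨z, hz⟩
  · obtain ⟨z, hz⟩ := h x hx
    exact ⟨r, z, rfl, hz, hx⟩

lemma component_isRPath {a x : V} (ha : a ∈ Γ.verts) (hx : Γ.SameComp r a x)
    (hout : Γ.HasOut r x) :
    (Γ.component r a ha).IsRPath Γ r := by
  obtain ⟨y, hy⟩ := hout
  exact ⟨component_isComponent ha, fun htriv => htriv r x y ⟨rfl, hy, hx⟩⟩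

/-- Each edge of an `r`-component is determined by its source. -/
lemma Admissible.edgeCount_component (hadm : Γ.Admissible) {a : V} (ha : a ∈ Γ.verts) :
    (Γ.component r a ha).edgeCount = Nat.card {x // Γ.SameComp r a x ∧ Γ.HasOut r x} := by
  refine Nat.card_eq_of_bijective (fun e => ⟨e.1.2.1, e.2.2.2, e.1.2.2, e.2.2.1⟩) ⟨?_, ?_⟩
  · rintro ⟨⟨r1, x, y1⟩, hr1, he1, hx1⟩ ⟨⟨r2, x', y2⟩, hr2, he2, hx2⟩ hxx
    dsimp only at hr1 hr2 he1 he2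
    cases hr1; cases hr2
    obtain rfl : x = x' := congrArg Subtype.val hxx
    obtain rfl := hadm.1 _ _ _ _ he1 he2
    rfl
  · rintro ⟨x, hx, y, hy⟩
    exact ⟨⟨(r, x, y), rfl, hy, hx⟩, rfl⟩

lemma Admissible.edgeCount_component_of_compClosed (hadm : Γ.Admissible) {a : V}
    (ha : a ∈ Γ.verts) (hcl : Γ.CompClosed r a) :
    (Γ.component r a ha).edgeCount = Nat.card {x // Γ.SameComp r a x} := by
  rw [hadm.edgeCount_component ha]
  exact Nat.card_congr ⟨fun x => ⟨x.1, x.2.1⟩, fun x => ⟨x.1, x.2, hcl x.1 x.2⟩,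
    fun _ => rfl, fun _ => rfl⟩

/-- A string has exactly one vertex without an outgoing edge, its end. -/
lemma Admissible.card_component_of_not_compClosed (hadm : Γ.Admissible) {a : V}
    (ha : a ∈ Γ.verts) (hnc : ¬ Γ.CompClosed r a) :
    Nat.card {x // Γ.SameComp r a x} = (Γ.component r a ha).edgeCount + 1 := by
  classical
  have := finite_sameComp (r := r) ha
  have : Finite {x // Γ.SameComp r a x ∧ Γ.HasOut r x} :=
    Finite.of_injective (fun x => (⟨x.1, x.2.1⟩ : {x // Γ.SameComp r a x}))
      fun x y h => Subtype.ext (congrArg Subtype.val h :)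
  obtain ⟨w, hw, hwout⟩ : ∃ w, Γ.SameComp r a w ∧ ¬ Γ.HasOut r w := by
    simpa [CompClosed] using hnc
  have e : {x // Γ.SameComp r a x} ≃ {x // Γ.SameComp r a x ∧ Γ.HasOut r x} ⊕ Unit := by
    refine Equiv.ofBijective (fun x => if h : Γ.HasOut r x.1 then .inl ⟨x.1, x.2, h⟩
      else .inr ()) ⟨?_, ?_⟩
    · rintro ⟨x, hx⟩ ⟨y, hy⟩ hEq
      by_cases h1 : Γ.HasOut r x <;> by_cases h2 : Γ.HasOut r y <;> simp [h1, h2] at hEq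
      · exact Subtype.ext hEq
      · exact Subtype.ext (hadm.eq_of_sameComp_of_not_hasOut (hx.symm.trans hy) h1 h2)
    · rintro (⟨x, hx, hout⟩ | ⟨⟩)
      · exact ⟨⟨x, hx⟩, by simp [hout]⟩
      · exact ⟨⟨w, hw⟩, by simp [hwout]⟩
  rw [Nat.card_congr e, Nat.card_sum, hadm.edgeCount_component ha, Nat.card_unique (α := Unit)]

lemma StronglyAdmissible.card_eq_of_compClosed {d : Fin s → ℕ∞}
    (hSA : Γ.StronglyAdmissible d)     {a : V} (ha : a ∈ Γ.verts) (hcl : Γ.CompClosed r a) :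
    (Nat.card {x // Γ.SameComp r a x} : ℕ∞) = d r := by
  rw [← hSA.1.edgeCount_component_of_compClosed ha hcl]
  exact (hSA.2 r _ (component_isRPath ha (.refl a) (hcl a (.refl a)))).1
    ((component_closed_iff ha).2 hcl)

lemma StronglyAdmissible.card_le_of_not_compClosed {d : Fin s → ℕ∞}
    (hSA : Γ.StronglyAdmissible d) {a x : V} (ha : a ∈ Γ.verts) (hnc : ¬ Γ.CompClosed r a)
    (hx : Γ.SameComp r a x) (hout : Γ.HasOut r x) :
    (Nat.card {x // Γ.SameComp r a x} : ℕ∞) ≤ d r := by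
  have hlt := (hSA.2 r _ (component_isRPath ha hx hout)).2 (mt (component_closed_iff ha).1 hnc)
  rw [hSA.1.card_component_of_not_compClosed ha hnc, Nat.cast_add_one]
  exact Order.add_one_le_of_lt hlt

/-- Loops have exactly `n = d r` vertices, and strings are too short to carry a chain of length
`n`. -/
lemma StronglyAdmissible.isChain_apply_eq {d : Fin s → ℕ∞} (hSA : Γ.StronglyAdmissible d)
    {c : ℕ → V} {k n : ℕ} (hc : Γ.IsChain r c k) (h0 : c 0 ∈ Γ.verts)
    (hn : (n : ℕ∞) = d r) (hnk : n ≤ k) : c n = c 0 := by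
  by_cases hcl : Γ.CompClosed r (c 0)
  · have hcard : Nat.card {x // Γ.SameComp r (c 0) x} = n := by
      exact_mod_cast (hSA.card_eq_of_compClosed h0 hcl).trans hn.symm
    simpa [hcard] using hc.apply_card_eq hSA.1 h0 (hcard ▸ hnk)
  · rcases Nat.eq_zero_or_pos n with rfl | hpos
    · rfl
    have hle : Nat.card {x // Γ.SameComp r (c 0) x} ≤ n := by
      exact_mod_cast hn ▸ hSA.card_le_of_not_compClosed h0 hcl (.refl _) (hc.hasOut (by omega))
    have hcard_pos : 0 < Nat.card {x // Γ.SameComp r (c 0) x} :=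
      have := finite_sameComp (r := r) h0
      Nat.card_pos_iff.2 ⟨⟨⟨c 0, .refl _⟩⟩, this⟩
    exact absurd ((hc.mono (hle.trans hnk)).compClosed_of_cycle hSA.1 hcard_pos
      (hc.apply_card_eq hSA.1 h0 (hle.trans hnk))) hcl

section Hom

variable {U U' : Type} {Δ : CGraph U s} {Δ' : CGraph U' s}

structure IsHom (Δ : CGraph U s) (Δ' : CGraph U' s) (f : U → U') : Prop where
  mapsTo : Set.MapsTo f Δ.verts Δ'.verts
  map_E : ∀ {r a b}, Δ.E r a b → Δ'.E r (f a) (f b)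

lemma SameComp.map {f : U → U'} (hf : IsHom Δ Δ' f) {r : Fin s} {a b : U}
    (h : Δ.SameComp r a b) : Δ'.SameComp r (f a) (f b) := by
  induction h with
  | refl => exact .refl _
  | tail _ hstep ih =>
    rcases hstep with he | he
    · exact ih.trans (.of_edge (hf.map_E he))
    · exact ih.trans (SameComp.of_edge (hf.map_E he)).symm

lemma IsChain.map {f : U → U'} (hf : IsHom Δ Δ' f) {r : Fin s} {c : ℕ → U} {k : ℕ}
    (hc : Δ.IsChain r c k) : Δ'.IsChain r (f ∘ c) k :=
  fun i hi => hf.map_E (hc i hi)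

end Hom

section Quotient

variable {σ π ρ : Setoid V}

lemma quot_mk_mem {a : V} (ha : a ∈ Γ.verts) : Quotient.mk π a ∈ (Γ.quot π).verts :=
  ⟨a, ha, rfl⟩

lemma Connected.quot (h : Γ.Connected) : (Γ.quot π).Connected := by
  have key : ∀ x y : V, Relation.ReflTransGen Γ.Adj x y →
      Relation.ReflTransGen (Γ.quot π).Adj (Quotient.mk π x) (Quotient.mk π y) := by
    intro x y hxy
    induction hxy with
    | refl => exact .refl
    | @tail b c _ hstep ih =>
      obtain ⟨r, he | he⟩ := hstep
      · exact ih.tail ⟨r, Or.inl ⟨b, c, he, rfl, rfl⟩⟩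
      · exact ih.tail ⟨r, Or.inr ⟨c, b, he, rfl, rfl⟩⟩
  rintro _ ⟨a, ha, rfl⟩ _ ⟨b, hb, rfl⟩
  exact key a b (h a ha b hb)

lemma IsCongruence.admissible_quot (hcong : Γ.IsCongruence π) : (Γ.quot π).Admissible := by
  constructor
  · rintro r _ _ _ ⟨a, b, he, rfl, rfl⟩ ⟨a', b', he', ha', rfl⟩
    exact Quotient.sound ((hcong r a b a' b' he he').1 (Quotient.exact ha'.symm))
  · rintro r _ _ _ ⟨a, b, he, rfl, rfl⟩ ⟨a', b', he', rfl, hb'⟩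
    exact Quotient.sound ((hcong r a b a' b' he he').2 (Quotient.exact hb'.symm))

lemma IsCongruence.inf (hπ : Γ.IsCongruence π) (hρ : Γ.IsCongruence ρ) :
    Γ.IsCongruence (π ⊓ ρ) := fun r a₁ b₁ a₂ b₂ e₁ e₂ =>
  and_congr (hπ r a₁ b₁ a₂ b₂ e₁ e₂) (hρ r a₁ b₁ a₂ b₂ e₁ e₂)

def quotMap (h : σ ≤ π) : Quotient σ → Quotient π :=
  Quotient.lift (Quotient.mk π) fun _ _ hab => Quotient.sound (h hab)

lemma quotMap_inf_injective {A B : Quotient (π ⊓ ρ)}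
    (hπ : quotMap inf_le_left A = quotMap inf_le_left B)
    (hρ : quotMap inf_le_right A = quotMap inf_le_right B) : A = B := by
  induction A using Quotient.inductionOn
  induction B using Quotient.inductionOn
  exact Quotient.sound ⟨Quotient.exact hπ, Quotient.exact hρ⟩

lemma quotMap_mem (h : σ ≤ π) {A : Quotient σ} (hA : A ∈ (Γ.quot σ).verts) :
    quotMap h A ∈ (Γ.quot π).verts := by
  obtain ⟨a, ha, rfl⟩ := hA
  exact quot_mk_mem ha

lemma quot_E_quotMap (h : σ ≤ π) {r : Fin s} {A B : Quotient σ} (hAB : (Γ.quot σ).E r A B) :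
    (Γ.quot π).E r (quotMap h A) (quotMap h B) := by
  obtain ⟨a, b, he, rfl, rfl⟩ := hAB
  exact ⟨a, b, he, rfl, rfl⟩

lemma isHom_quotMap (h : σ ≤ π) : IsHom (Γ.quot σ) (Γ.quot π) (quotMap h) :=
  ⟨fun _ hA => quotMap_mem h hA, quot_E_quotMap h⟩

variable {d : Fin s → ℕ∞}

/-- The image in `Γ/π` is a loop with `n = d r` vertices, so `n ≤ k`; both images return to
their start after `n` steps, hence so does the chain, and we recurse on the remaining steps. -/
lemma IsStrongCongruence.isChain_eq_of_quotMap_eq (hπ : Γ.IsStrongCongruence d π)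
    (hρ : Γ.IsStrongCongruence d ρ) {k : ℕ} :
    ∀ {c : ℕ → Quotient (π ⊓ ρ)}, (Γ.quot (π ⊓ ρ)).IsChain r c k →
      quotMap inf_le_left (c k) = quotMap inf_le_left (c 0) → c k = c 0 := by
  induction k using Nat.strong_induction_on with
  | _ k ih =>
  intro c hc hret
  rcases Nat.eq_zero_or_pos k with rfl | hk
  · rfl
  have hcπ := hc.map (isHom_quotMap (inf_le_left : π ⊓ ρ ≤ π))
  have hcρ := hc.map (isHom_quotMap (inf_le_right : π ⊓ ρ ≤ ρ))
  have hmemπ := (Γ.quot π).memL r _ _ (hcπ 0 hk)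
  have hmemρ := (Γ.quot ρ).memL r _ _ (hcρ 0 hk)
  have hcl := hcπ.compClosed_of_cycle hπ.2.1 hk hret
  set n := Nat.card {x // (Γ.quot π).SameComp r (quotMap inf_le_left (c 0)) x}
  have hn : (n : ℕ∞) = d r := hπ.2.card_eq_of_compClosed hmemπ hcl
  have hnk : n ≤ k := hcπ.card_le_of_cycle hπ.2.1 hk hret
  have hn0 : 0 < n :=
    have := finite_sameComp (r := r) hmemπ
    Nat.card_pos_iff.2 ⟨⟨⟨_, .refl _⟩⟩, this⟩
  have hcn : c n = c 0 := quotMap_inf_injective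
    (hπ.2.isChain_apply_eq hcπ hmemπ hn hnk) (hρ.2.isChain_apply_eq hcρ hmemρ hn hnk)
  have hrest := ih (k - n) (by omega) (hc.shift n) (by simpa [Nat.sub_add_cancel hnk, hcn])
  simpa [Nat.sub_add_cancel hnk, hcn] using hrest

lemma IsStrongCongruence.eq_of_sameComp_of_quotMap_eq (hπ : Γ.IsStrongCongruence d π)
    (hρ : Γ.IsStrongCongruence d ρ) {A B : Quotient (π ⊓ ρ)}
    (hAB : (Γ.quot (π ⊓ ρ)).SameComp r A B)
    (hp : quotMap inf_le_left A = quotMap inf_le_left B) : A = B := by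
  rcases (hπ.1.inf hρ.1).admissible_quot.reflTransGen_or_of_sameComp hAB with h | h <;>
    obtain ⟨c, k, hc, rfl, rfl⟩ := exists_isChain_of_reflTransGen h
  · exact (hπ.isChain_eq_of_quotMap_eq hρ hc hp.symm).symm
  · exact hπ.isChain_eq_of_quotMap_eq hρ hc hp

end Quotient

section Incidence

variable {U : Type} {Δ : CGraph U s}

def compSetoid (Δ : CGraph U s) (r : Fin s) : Setoid Δ.verts :=
  ⟨fun x y => Δ.SameComp r x y, ⟨fun _ => .refl _, SameComp.symm, SameComp.trans⟩⟩

abbrev IncNode (Δ : CGraph U s) := Δ.verts ⊕ Σ r : Fin s, Quotient (Δ.compSetoid r)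

def IncAdj (Δ : CGraph U s) : IncNode Δ → IncNode Δ → Prop
  | .inl x, .inr C => Quotient.mk _ x = C.2
  | .inr C, .inl x => Quotient.mk _ x = C.2
  | _, _ => False

/-- The bipartite graph joining each vertex to its `r`-component (possibly trivial), for every
color `r`. -/
def incidenceGraph (Δ : CGraph U s) : SimpleGraph (IncNode Δ) where
  Adj := IncAdj Δ
  symm := ⟨by rintro (_ | _) (_ | _) h <;> exact h⟩
  loopless := ⟨by rintro (_ | _) h <;> exact h⟩

instance instFiniteVerts (Δ : CGraph U s) : Finite Δ.verts := Δ.finite.to_subtype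

lemma incidenceGraph_connected (h : Δ.Connected) : (incidenceGraph Δ).Connected := by
  have hverts : ∀ (a b : U) (ha : a ∈ Δ.verts) (hb : b ∈ Δ.verts),
      Relation.ReflTransGen Δ.Adj a b →
        (incidenceGraph Δ).Reachable (.inl ⟨a, ha⟩) (.inl ⟨b, hb⟩) := by
    intro a b ha hb hab
    induction hab with
    | refl => exact .refl _
    | @tail b' b _ hstep ih =>
      obtain ⟨r, hstep⟩ := hstep
      have hb' : b' ∈ Δ.verts := hstep.elim (Δ.memL _ _ _) (Δ.memR _ _ _)
      have hsame : Δ.SameComp r b' b := hstep.elim .of_edge fun he => (SameComp.of_edge he).symm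
      let C : IncNode Δ := .inr ⟨r, Quotient.mk _ ⟨b', hb'⟩⟩
      have h₁ : (incidenceGraph Δ).Adj (.inl ⟨b', hb'⟩) C := rfl
      have h₂ : (incidenceGraph Δ).Adj C (.inl ⟨b, hb⟩) := Quotient.sound hsame.symm
      exact (ih hb').trans (h₁.reachable.trans h₂.reachable)
  have hnode : ∀ u : IncNode Δ, ∃ x : Δ.verts, (incidenceGraph Δ).Reachable u (.inl x) := by
    rintro (x | ⟨r, C⟩)
    · exact ⟨x, .refl _⟩
    · induction C using Quotient.inductionOn with
      | _ x => exact ⟨x, SimpleGraph.Adj.reachable (G := incidenceGraph Δ) rfl⟩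
  have : Nonempty (IncNode Δ) := ⟨.inl ⟨_, Δ.nonem.some_mem⟩⟩
  refine ⟨fun u v => ?_⟩
  obtain ⟨⟨a, ha⟩, hu⟩ := hnode u
  obtain ⟨⟨b, hb⟩, hv⟩ := hnode v
  exact hu.trans ((hverts a b ha hb (h a ha b hb)).trans hv.symm)

lemma card_edgeSet_incidenceGraph (Δ : CGraph U s) :
    Nat.card (incidenceGraph Δ).edgeSet = s * Nat.card Δ.verts := by
  have hbij : Function.Bijective fun q : Fin s × Δ.verts =>
      (⟨s(.inl q.2, .inr ⟨q.1, Quotient.mk _ q.2⟩), rfl⟩ :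
        (incidenceGraph Δ).edgeSet) := by
    refine ⟨fun ⟨r₁, x₁⟩ ⟨r₂, x₂⟩ h => ?_, fun ⟨e, he⟩ => ?_⟩
    · rcases Sym2.eq_iff.1 (congrArg Subtype.val h) with ⟨hx, hr⟩ | ⟨hx, -⟩
      · obtain rfl := Sum.inl_injective hx
        obtain rfl := congrArg Sigma.fst (Sum.inr_injective hr)
        rfl
      · exact absurd hx Sum.inl_ne_inr
    · induction e using Sym2.ind with
      | _ u v =>
      rcases u with x | ⟨r, C⟩ <;> rcases v with y | ⟨r', C'⟩
      · exact absurd he id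
      · obtain rfl : Quotient.mk _ x = C' := he
        exact ⟨(r', x), rfl⟩
      · obtain rfl : Quotient.mk _ y = C := he
        exact ⟨(r, y), Subtype.ext Sym2.eq_swap⟩
      · exact absurd he id
  rw [← Nat.card_eq_of_bijective _ hbij, Nat.card_prod, Nat.card_eq_fintype_card (α := Fin s),
    Fintype.card_fin]

lemma IsRPath.subset {P : CGraph U s} {r : Fin s} (hP : P.IsRPath Δ r) : P.verts ⊆ Δ.verts :=
  hP.1.1.1

lemma IsRPath.eq_component {P : CGraph U s} {r : Fin s} (hP : P.IsRPath Δ r) {a : U}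
    (haP : a ∈ P.verts) : P = Δ.component r a (hP.subset haP) :=
  hP.1.eq_component haP _

lemma IsRPath.color_eq {P : CGraph U s} {r r' : Fin s} (hP : P.IsRPath Δ r)
    (hP' : P.IsRPath Δ r') : r = r' := by
  obtain ⟨r'', a, b, he⟩ : ∃ r'' a b, P.E r'' a b := by simpa [Trivial] using hP.2
  exact (hP.1.1.2 _ _ _ he).1.symm.trans (hP'.1.1.2 _ _ _ he).1

/-- Each `r`-component of an admissible graph is either a loop or contains exactly one vertex
without an outgoing `r`-edge. -/
lemma Admissible.bijective_loops_sum_not_hasOut (hadm : Δ.Admissible) (r : Fin s) :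
    Function.Bijective (Sum.elim
      (fun P : {P : CGraph U s // P.IsRPath Δ r ∧ P.Closed} =>
        Quotient.mk (Δ.compSetoid r) ⟨_, P.2.1.subset P.1.nonem.some_mem⟩)
      (fun x : {x : Δ.verts // ¬ Δ.HasOut r x} => Quotient.mk (Δ.compSetoid r) x.1)) := by
  have hclosed : ∀ P : {P : CGraph U s // P.IsRPath Δ r ∧ P.Closed},
      Δ.CompClosed r P.1.nonem.some := fun P =>
    (component_closed_iff _).1 (P.2.1.eq_component P.1.nonem.some_mem ▸ P.2.2)
  refine ⟨?_, ?_⟩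
  · rintro (P | ⟨x, hx⟩) (P' | ⟨y, hy⟩) h <;> have h' := Quotient.exact h
    · refine congrArg Sum.inl (Subtype.ext ?_)
      rw [P.2.1.eq_component P.1.nonem.some_mem, P'.2.1.eq_component P'.1.nonem.some_mem]
      exact component_eq_of_sameComp _ _ h'
    · exact absurd (hclosed P _ h') hy
    · exact absurd (hclosed P' _ h'.symm) hx
    · exact congrArg Sum.inr (Subtype.ext (Subtype.ext
        (hadm.eq_of_sameComp_of_not_hasOut h' hx hy)))
  · rintro ⟨x, hx⟩
    by_cases hcl : Δ.CompClosed r x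
    · refine ⟨.inl ⟨Δ.component r x hx, component_isRPath hx (.refl x) (hcl x (.refl x)),
        (component_closed_iff hx).2 hcl⟩, Quotient.sound ?_⟩
      exact SameComp.symm (Δ.component r x hx).nonem.some_mem
    · obtain ⟨w, hw, hwout⟩ : ∃ w, Δ.SameComp r x w ∧ ¬ Δ.HasOut r w := by
        simpa [CompClosed] using hcl
      exact ⟨.inr ⟨⟨w, hw.mem_verts hx⟩, hwout⟩, Quotient.sound hw.symm⟩

lemma Admissible.finite_loops (hadm : Δ.Admissible) (r : Fin s) :
    Finite {P : CGraph U s // P.IsRPath Δ r ∧ P.Closed} :=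
  Finite.of_injective _ ((hadm.bijective_loops_sum_not_hasOut r).1.comp Sum.inl_injective)


lemma Admissible.card_quotient_compSetoid (hadm : Δ.Admissible) (r : Fin s) :
    Nat.card (Quotient (Δ.compSetoid r)) =
      Nat.card {P : CGraph U s // P.IsRPath Δ r ∧ P.Closed} +
        Nat.card {x : Δ.verts // ¬ Δ.HasOut r x} := by
  have := hadm.finite_loops r
  rw [← Nat.card_sum, Nat.card_eq_of_bijective _ (hadm.bijective_loops_sum_not_hasOut r)]

lemma Admissible.loopCount_eq_sum (hadm : Δ.Admissible) :
    Δ.loopCount = ∑ r, Nat.card {P : CGraph U s // P.IsRPath Δ r ∧ P.Closed} := by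
  have := hadm.finite_loops
  have hbij : Function.Bijective fun q : Σ r, {P : CGraph U s // P.IsRPath Δ r ∧ P.Closed} =>
      (⟨q.2.1, ⟨q.1, q.2.2.1⟩, q.2.2.2⟩ : {P : CGraph U s // P.IsLoopOf Δ}) := by
    refine ⟨fun ⟨r₁, P₁, hP₁⟩ ⟨r₂, P₂, hP₂⟩ h => ?_,
      fun ⟨P, ⟨r, hP⟩, hcl⟩ => ⟨⟨r, P, hP, hcl⟩, rfl⟩⟩
    obtain rfl : P₁ = P₂ := congrArg Subtype.val h
    obtain rfl := hP₁.1.color_eq hP₂.1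
    rfl
  rw [loopCount, ← Nat.card_eq_of_bijective _ hbij, Nat.card_sigma]

lemma Admissible.edgeCount_eq_sum (hadm : Δ.Admissible) :
    Δ.edgeCount = ∑ r, Nat.card {x : Δ.verts // Δ.HasOut r x} := by
  have hbij : Function.Bijective fun e : {p : Fin s × U × U // Δ.E p.1 p.2.1 p.2.2} =>
      (⟨e.1.1, ⟨e.1.2.1, Δ.memL _ _ _ e.2⟩, e.1.2.2, e.2⟩ :
        Σ r, {x : Δ.verts // Δ.HasOut r x}) := by
    refine ⟨fun ⟨⟨r₁, a₁, b₁⟩, h₁⟩ ⟨⟨r₂, a₂, b₂⟩, h₂⟩ h => ?_,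
      fun ⟨r, x, b, hb⟩ => ⟨⟨(r, x, b), hb⟩, rfl⟩⟩
    obtain ⟨rfl, h'⟩ := Sigma.mk.inj_iff.1 h
    obtain rfl : a₁ = a₂ := congrArg (fun x => x.1.1) (eq_of_heq h')
    obtain rfl := hadm.1 _ _ _ _ h₁ h₂
    rfl
  rw [edgeCount, Nat.card_eq_of_bijective _ hbij, Nat.card_sigma]

/-- The incidence graph has `s |V|` edges and
`|V| + Σ_r (#r-loops + #{x | no r-edge leaves x}) = |V| + L + (s |V| - E) = s |V| + χ` nodes. -/
theorem Admissible.isTree_incidenceGraph (hadm : Δ.Admissible) (hconn : Δ.Connected)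
    (hχ : Δ.chi = 1) : (incidenceGraph Δ).IsTree := by
  refine SimpleGraph.isTree_iff_connected_and_card.2 ⟨incidenceGraph_connected hconn, ?_⟩
  have hsplit : ∀ r, Nat.card {x : Δ.verts // Δ.HasOut r x} +
      Nat.card {x : Δ.verts // ¬ Δ.HasOut r x} = Nat.card Δ.verts := fun r => by
    classical
    rw [← Nat.card_sum]
    exact Nat.card_congr (Equiv.sumCompl _)
  have hnodes : Nat.card (IncNode Δ) = Nat.card Δ.verts + Δ.loopCount +
      ∑ r, Nat.card {x : Δ.verts // ¬ Δ.HasOut r x} := by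
    rw [Nat.card_sum, Nat.card_sigma, hadm.loopCount_eq_sum, add_assoc, ← Finset.sum_add_distrib]
    simp only [hadm.card_quotient_compSetoid]
  have hedges : s * Nat.card Δ.verts = Δ.edgeCount +
      ∑ r, Nat.card {x : Δ.verts // ¬ Δ.HasOut r x} := by
    rw [hadm.edgeCount_eq_sum, ← Finset.sum_add_distrib]
    simp [hsplit]
  have hVLE : Δ.vertCount + Δ.loopCount = Δ.edgeCount + 1 := by
    unfold chi at hχ
    omega
  rw [card_edgeSet_incidenceGraph, hnodes]
  simp only [vertCount] at hVLE
  omega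

end Incidence

section IncidenceHom

variable {U U' : Type} {Δ : CGraph U s} {Δ' : CGraph U' s} {f : U → U'}

def IsHom.incidenceHom (hf : IsHom Δ Δ' f) : incidenceGraph Δ →g incidenceGraph Δ' where
  toFun := Sum.map (hf.mapsTo.restrict f _ _) fun C =>
    ⟨C.1, Quotient.map (hf.mapsTo.restrict f _ _) (fun _ _ h => SameComp.map hf h) C.2⟩
  map_rel' := by
    rintro (x | ⟨r, C⟩) (y | ⟨r', C'⟩) h
    · exact h.elim
    · change Quotient.mk _ x = C' at h
      subst h
      rfl
    · change Quotient.mk _ y = C at h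
      subst h
      rfl
    · exact h.elim

lemma IsHom.locallyInjective_incidenceHom (hf : IsHom Δ Δ' f)
    (hinj : ∀ r, ∀ x ∈ Δ.verts, ∀ y, Δ.SameComp r x y → f x = f y → x = y) :
    hf.incidenceHom.LocallyInjective := by
  rintro (x | ⟨r₁, C₁⟩) (y | ⟨r₂, C₂⟩) (z | ⟨r, C⟩) hu hv h <;>
    first | exact hu.elim | exact hv.elim | skip
  · change Quotient.mk _ x = C at hu
    change Quotient.mk _ y = C at hv
    exact congrArg Sum.inl (Subtype.ext (hinj r x x.2 y (Quotient.exact (hu.trans hv.symm))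
      (congrArg Subtype.val (Sum.inl_injective h))))
  · change Quotient.mk _ z = C₁ at hu
    change Quotient.mk _ z = C₂ at hv
    subst hu hv
    obtain rfl := congrArg Sigma.fst (Sum.inr_injective h)
    rfl

end IncidenceHom

variable {π ρ : Setoid V} {d : Fin s → ℕ∞}

/-- The incidence graph of `Γ/(π ⊓ ρ)` is connected, that of `Γ/π` is a tree, and the
projection between them is locally injective. -/
lemma IsStrongCongruence.injOn_quotMap (hconn : Γ.Connected) (hπ : Γ.IsStrongCongruence d π)
    (hρ : Γ.IsStrongCongruence d ρ) (hχ : (Γ.quot π).chi = 1) :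
    Set.InjOn (quotMap (inf_le_left : π ⊓ ρ ≤ π)) (Γ.quot (π ⊓ ρ)).verts := by
  intro A hA B hB h
  have hhom := isHom_quotMap (Γ := Γ) (inf_le_left : π ⊓ ρ ≤ π)
  have hF := hhom.locallyInjective_incidenceHom fun _ _ _ _ hXY hp =>
    hπ.eq_of_sameComp_of_quotMap_eq hρ hXY hp
  have hFinj := hF.injective (incidenceGraph_connected hconn.quot).preconnected
    (hπ.2.1.isTree_incidenceGraph hconn.quot hχ).isAcyclic
  exact congrArg Subtype.val <| Sum.inl_injective <|
    hFinj (a₁ := .inl ⟨A, hA⟩) (a₂ := .inl ⟨B, hB⟩) (congrArg Sum.inl (Subtype.ext h))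

lemma IsStrongCongruence.rel_of_chi_quot_eq_one (hconn : Γ.Connected)
    (hπ : Γ.IsStrongCongruence d π) (hρ : Γ.IsStrongCongruence d ρ)
    (hχ : (Γ.quot π).chi = 1) {a b : V} (ha : a ∈ Γ.verts) (hb : b ∈ Γ.verts)
    (hab : π.r a b) : ρ.r a b :=
  (Quotient.exact (hπ.injOn_quotMap hconn hρ hχ (quot_mk_mem ha) (quot_mk_mem hb)
    (Quotient.sound hab))).2

end CGraph

theorem strong_congruence_chi_one_unique_general {V : Type} {s : ℕ}
    (d : Fin s → ℕ∞)
    (Γ : CGraph V s) (hconn : Γ.Connected)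
    (π ρ : Setoid V)
    (hπ : Γ.IsStrongCongruence d π) (hρ : Γ.IsStrongCongruence d ρ)
    (hχπ : (Γ.quot π).chi = 1) (hχρ : (Γ.quot ρ).chi = 1) :
    ∀ a ∈ Γ.verts, ∀ b ∈ Γ.verts, (π.r a b ↔ ρ.r a b) := fun _ ha _ hb =>
  ⟨hπ.rel_of_chi_quot_eq_one hconn hρ hχπ ha hb,
    hρ.rel_of_chi_quot_eq_one hconn hπ hχρ ha hb⟩

/-- For every connected graph `Γ` there is at most one strong congruence `π` of `Γ`
with `χ(Γ/π) = 1`: any two such induce the same partition of the vertex set. -/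
theorem strong_congruence_chi_one_unique {V : Type} {s : ℕ}
    (hs : 0 < s) (d : Fin s → ℕ∞) (hd : ∀ r, 1 ≤ d r)
    (Γ : CGraph V s) (hconn : Γ.Connected)
    (π ρ : Setoid V)
    (hπ : Γ.IsStrongCongruence d π) (hρ : Γ.IsStrongCongruence d ρ)
    (hχπ : (Γ.quot π).chi = 1) (hχρ : (Γ.quot ρ).chi = 1) :
    ∀ a ∈ Γ.verts, ∀ b ∈ Γ.verts, (π.r a b ↔ ρ.r a b) :=
  strong_congruence_chi_one_unique_general d Γ hconn π ρ hπ hρ hχπ hχρ
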